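/- arXiv:1906.01911 — 2 statements merged into one kernel-verified Lean document; each statement's English description precedes it below -/
import Mathlib

section
/- Let σ : ℕ × ℕ → ℕ × ℕ be the map σ(q, p) = (p, q) and τ : ℕ × ℕ → ℕ × ℕ be the map τ(q, p) = (q, p + q). For every pair of positive natural numbers (q, p) with gcd(q, p) = 1 and (q, p) ≠ (1, 1), there exists a nonempty word w over {σ, τ} (a list of Booleans with `true` = σ, `false` = τ, acting by a right fold so the last entry acts first) with no two adjacent σ's and whose last entry is τ, such that applying w to (1, 1) yields (q, p). -/
/-- The map σ(q, p) = (p, q), swapping the components of a pair. -/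
def sigmaMap : ℕ × ℕ → ℕ × ℕ := fun x => (x.2, x.1)

/-- The map τ(q, p) = (q, p + q). -/
def tauMap : ℕ × ℕ → ℕ × ℕ := fun x => (x.1, x.2 + x.1)

/-- A word (list of Booleans, `true` = σ, `false` = τ) acts on ℕ × ℕ by a right
fold, so the last entry of the list acts first. -/
def applyWord (w : List Bool) (x : ℕ × ℕ) : ℕ × ℕ :=
  w.foldr (fun b y => if b then sigmaMap y else tauMap y) x

/-- No two adjacent `true` entries (no two consecutive σ's). -/
def NoTwoSigma (w : List Bool) : Prop :=
  List.Chain' (fun a b => a = false ∨ b = false) w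

/-!
Run the subtractive Euclidean algorithm backwards. A pair `(q, q + r)` with `0 < q` is the
image under τ of `(q, r)`, and a pair `(q, r)` with `r < q` is the image under σ of
`(r, q)`. Every admissible word beginning with τ produces a pair whose first entry is the
smaller one, so σ is only ever prepended to a word beginning with τ and never creates `σσ`.
-/

@[simp]
lemma applyWord_false_cons (w : List Bool) (x : ℕ × ℕ) :
    applyWord (false :: w) x = tauMap (applyWord w x) := rfl

@[simp]
lemma applyWord_true_cons (w : List Bool) (x : ℕ × ℕ) :
    applyWord (true :: w) x = sigmaMap (applyWord w x) := rfl

def IsAdmissible (w : List Bool) : Prop :=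
  w ≠ [] ∧ NoTwoSigma w ∧ w.getLast? = some false

lemma isAdmissible_singleton_false : IsAdmissible [false] :=
  ⟨List.cons_ne_nil _ _, List.isChain_singleton _, rfl⟩

lemma IsAdmissible.false_cons {w : List Bool} (hw : IsAdmissible w) :
    IsAdmissible (false :: w) := by
  obtain ⟨hne, hchain, hlast⟩ := hw
  refine ⟨List.cons_ne_nil _ _, hchain.cons fun _ _ => Or.inl rfl, ?_⟩
  rwa [List.getLast?_cons_of_ne_nil hne]

lemma IsAdmissible.true_cons {w : List Bool} (hw : IsAdmissible w)
    (hhead : w.head? = some false) : IsAdmissible (true :: w) := by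
  obtain ⟨hne, hchain, hlast⟩ := hw
  refine ⟨List.cons_ne_nil _ _, hchain.cons fun b hb => Or.inr ?_, ?_⟩
  · rw [hhead, Option.mem_some_iff] at hb
    exact hb.symm
  · rwa [List.getLast?_cons_of_ne_nil hne]

lemma exists_admissible_tau_word_of_lt {q p : ℕ} (hq : 0 < q) (hlt : q < p)
    (hcop : Nat.Coprime q p) :
    ∃ w, IsAdmissible w ∧ w.head? = some false ∧ applyWord w (1, 1) = (q, p) := by
  induction p using Nat.strong_induction_on generalizing q with
  | _ p ih =>
  obtain ⟨r, rfl⟩ := Nat.exists_eq_add_of_le hlt.le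
  have hr : 0 < r := by omega
  have hcop' : Nat.Coprime q r := Nat.coprime_self_add_right.mp hcop
  rcases lt_trichotomy q r with hqr | rfl | hrq
  · obtain ⟨w, hw, -, hval⟩ := ih r (by omega) hq hqr hcop'
    refine ⟨false :: w, hw.false_cons, rfl, ?_⟩
    simp [hval, tauMap, add_comm]
  · obtain rfl : q = 1 := (Nat.coprime_self q).mp hcop'
    exact ⟨[false], isAdmissible_singleton_false, rfl, rfl⟩
  · obtain ⟨w, hw, hhead, hval⟩ := ih q (by omega) hr hrq hcop'.symm
    refine ⟨false :: true :: w, (hw.true_cons hhead).false_cons, rfl, ?_⟩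
    simp [hval, tauMap, sigmaMap, add_comm]

/-- Every coprime pair of positive naturals other than (1,1) is reached from
(1,1) by some admissible word. -/
theorem exists_word_of_coprime (q p : ℕ) (hq : 0 < q) (hp : 0 < p)
    (hgcd : Nat.gcd q p = 1) (hne : (q, p) ≠ (1, 1)) :
    ∃ w : List Bool, w ≠ [] ∧ NoTwoSigma w ∧ w.getLast? = some false ∧
      applyWord w (1, 1) = (q, p) := by
  rcases lt_trichotomy q p with hlt | rfl | hgt
  · obtain ⟨w, ⟨hw, hchain, hlast⟩, -, hval⟩ := exists_admissible_tau_word_of_lt hq hlt hgcd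
    exact ⟨w, hw, hchain, hlast, hval⟩
  · obtain rfl : q = 1 := (Nat.coprime_self q).mp hgcd
    exact absurd rfl hne
  · obtain ⟨w, hw, hhead, hval⟩ :=
      exists_admissible_tau_word_of_lt hp hgt (Nat.Coprime.symm hgcd)
    obtain ⟨hw, hchain, hlast⟩ := hw.true_cons hhead
    exact ⟨true :: w, hw, hchain, hlast, by simp [hval, sigmaMap]⟩
end

section
/- Let σ : ℕ × ℕ → ℕ × ℕ be the map σ(q, p) = (p, q) and τ : ℕ × ℕ → ℕ × ℕ be the map τ(q, p) = (q, p + q). The word representing a given coprime pair is unique: if w₁ and w₂ are nonempty words over {σ, τ} (lists of Booleans with `true` = σ, `false` = τ, acting by a right fold), each with no two adjacent σ's and each ending in τ, and applying w₁ to (1, 1) gives the same pair as applying w₂ to (1, 1), then w₁ = w₂. -/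
lemma applyWord_cons (b : Bool) (w : List Bool) (x : ℕ × ℕ) :
    applyWord (b :: w) x = if b then sigmaMap (applyWord w x) else tauMap (applyWord w x) := rfl

lemma key : ∀ w : List Bool, w ≠ [] → NoTwoSigma w → w.getLast? = some false →
    0 < (applyWord w (1,1)).1 ∧ 0 < (applyWord w (1,1)).2 ∧
    (w.head? = some false → (applyWord w (1,1)).1 < (applyWord w (1,1)).2) ∧
    (w.head? = some true → (applyWord w (1,1)).2 < (applyWord w (1,1)).1) := by
  intro w
  induction w with
  | nil => simp
  | cons b t ih =>
    intro _ hc hl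
    cases t with
    | nil =>
      simp [List.getLast?] at hl
      subst hl
      simp [applyWord, tauMap, sigmaMap]
    | cons c t' =>
      have hc' : NoTwoSigma (c :: t') := hc.tail
      have hl' : (c :: t').getLast? = some false := by
        rwa [List.getLast?_cons_cons] at hl
      obtain ⟨h1, h2, h3, h4⟩ := ih (by simp) hc' hl'
      cases b with
      | false =>
        exact ⟨show 0 < (applyWord (c :: t') (1,1)).1 from h1,
          show 0 < (applyWord (c :: t') (1,1)).2 + (applyWord (c :: t') (1,1)).1 by omega,
          fun _ => show (applyWord (c :: t') (1,1)).1 <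
            (applyWord (c :: t') (1,1)).2 + (applyWord (c :: t') (1,1)).1 by omega,
          by simp⟩
      | true =>
        have hcf : c = false := by
          rcases (List.isChain_cons_cons.mp hc).1 with h | h
          · exact absurd h (by simp)
          · exact h
        subst hcf
        have hlt := h3 rfl
        exact ⟨show 0 < (applyWord (false :: t') (1,1)).2 from h2,
          show 0 < (applyWord (false :: t') (1,1)).1 from h1,
          by simp,
          fun _ => show (applyWord (false :: t') (1,1)).1 <
            (applyWord (false :: t') (1,1)).2 from hlt⟩

lemma tauMap_inj {a b : ℕ × ℕ} (h : tauMap a = tauMap b) : a = b := by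
  simp only [tauMap, Prod.ext_iff] at h ⊢
  omega

lemma sigmaMap_inj {a b : ℕ × ℕ} (h : sigmaMap a = sigmaMap b) : a = b := by
  simp only [sigmaMap, Prod.ext_iff] at h ⊢
  exact ⟨h.2, h.1⟩

lemma last_ne {b : Bool} {t : List Bool} (h : (b :: t).getLast? = some false)
    (ht : t ≠ []) : t.getLast? = some false := by
  cases t with
  | nil => exact absurd rfl ht
  | cons c t' => rwa [List.getLast?_cons_cons] at h

lemma nonempty_ne_one (t : List Bool) (ht : t ≠ []) (hc : NoTwoSigma t)
    (hl : t.getLast? = some false) : applyWord t (1,1) ≠ (1,1) := by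
  obtain ⟨_, _, h3, h4⟩ := key t ht hc hl
  intro h
  cases t with
  | nil => exact ht rfl
  | cons c t' =>
    cases c
    · have := h3 rfl; rw [h] at this; simp at this
    · have := h4 rfl; rw [h] at this; simp at this

/-- The admissible word representing a pair is unique. -/
theorem word_unique (w₁ w₂ : List Bool)
    (h₁ne : w₁ ≠ []) (h₁chain : NoTwoSigma w₁) (h₁last : w₁.getLast? = some false)
    (h₂ne : w₂ ≠ []) (h₂chain : NoTwoSigma w₂) (h₂last : w₂.getLast? = some false)
    (heq : applyWord w₁ (1, 1) = applyWord w₂ (1, 1)) :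
    w₁ = w₂ := by
  induction w₁ generalizing w₂ with
  | nil => exact absurd rfl h₁ne
  | cons b₁ t₁ ih =>
    cases w₂ with
    | nil => exact absurd rfl h₂ne
    | cons b₂ t₂ =>
      obtain ⟨k11, k12, k13, k14⟩ := key (b₁ :: t₁) h₁ne h₁chain h₁last
      obtain ⟨k21, k22, k23, k24⟩ := key (b₂ :: t₂) h₂ne h₂chain h₂last
      have hb : b₁ = b₂ := by
        rw [heq] at k13 k14
        cases b₁ <;> cases b₂
        · rfl
        · have := k13 rfl; have := k24 rfl; omega
        · have := k14 rfl; have := k23 rfl; omega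
        · rfl
      subst hb
      have htail : applyWord t₁ (1,1) = applyWord t₂ (1,1) := by
        rw [applyWord_cons, applyWord_cons] at heq
        cases b₁ with
        | false => exact tauMap_inj (by simpa using heq)
        | true => exact sigmaMap_inj (by simpa using heq)
      cases b₁ with
      | true =>
        have ht₁ : t₁ ≠ [] := by rintro rfl; simp [List.getLast?] at h₁last
        have ht₂ : t₂ ≠ [] := by rintro rfl; simp [List.getLast?] at h₂last
        have := ih t₂ ht₁ h₁chain.tail (last_ne h₁last ht₁) ht₂ h₂chain.tail
          (last_ne h₂last ht₂) htail
        rw [this]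
      | false =>
        cases t₁ with
        | nil =>
          cases t₂ with
          | nil => rfl
          | cons c t' =>
            exact absurd htail.symm
              (nonempty_ne_one _ (by simp) h₂chain.tail (last_ne h₂last (by simp)))
        | cons c₁ t₁' =>
          cases t₂ with
          | nil =>
            exact absurd htail
              (nonempty_ne_one _ (by simp) h₁chain.tail (last_ne h₁last (by simp)))
          | cons c₂ t₂' =>
            have := ih (c₂ :: t₂') (by simp) h₁chain.tail (last_ne h₁last (by simp))
              (by simp) h₂chain.tail (last_ne h₂last (by simp)) htail
            rw [this]
end
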